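/- arXiv:1206.6615 — 12 statements merged into one kernel-verified Lean document; each statement's English description precedes it below -/
import Mathlib

section
/- Let f, g ∈ A be homogeneous. Then the odd Jacobi bracket is graded antisymmetric in the shifted parity: [f,g]_J = -(-1)^{(|f|+1)(|g|+1)} [g,f]_J. (Part 1 of the theorem that the odd Jacobi bracket defines an odd Jacobi algebra on C^∞(M).) -/
noncomputable section

/-- The sign `(-1)^i` for a parity `i : ZMod 2`. -/
def zsign (i : ZMod 2) : ℝ := if i = 0 then 1 else -1

/-- A Poisson superalgebra: a unital associative `ℝ`-algebra `P` with a `ℤ/2`-grading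
`P = P₀ ⊕ P₁` which is graded-commutative, equipped with an `ℝ`-bilinear, parity-preserving
bracket satisfying graded antisymmetry, the graded Leibniz rule and the graded Jacobi
identity (for homogeneous elements). -/
structure PoissonSuperalgebra (P : Type*) [Ring P] [Algebra ℝ P] where
  grade : ZMod 2 → Submodule ℝ P
  sup_grade : grade 0 ⊔ grade 1 = ⊤
  inf_grade : grade 0 ⊓ grade 1 = ⊥
  one_mem : (1 : P) ∈ grade 0
  mul_mem : ∀ {i j : ZMod 2} {a b : P}, a ∈ grade i → b ∈ grade j → a * b ∈ grade (i + j)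
  super_comm : ∀ {i j : ZMod 2} {a b : P}, a ∈ grade i → b ∈ grade j →
    a * b = zsign (i * j) • (b * a)
  bracket : P →ₗ[ℝ] P →ₗ[ℝ] P
  bracket_mem : ∀ {i j : ZMod 2} {a b : P}, a ∈ grade i → b ∈ grade j →
    bracket a b ∈ grade (i + j)
  bracket_antisymm : ∀ {i j : ZMod 2} {a b : P}, a ∈ grade i → b ∈ grade j →
    bracket a b = -(zsign (i * j) • bracket b a)
  bracket_leibniz : ∀ {i j k : ZMod 2} {a b c : P}, a ∈ grade i → b ∈ grade j →
    c ∈ grade k → bracket a (b * c) = bracket a b * c + zsign (i * j) • (b * bracket a c)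
  bracket_jacobi : ∀ {i j k : ZMod 2} {a b c : P}, a ∈ grade i → b ∈ grade j →
    c ∈ grade k →
    bracket a (bracket b c) = bracket (bracket a b) c + zsign (i * j) • bracket b (bracket a c)

variable {P : Type*} [Ring P] [Algebra ℝ P]

/-- The odd Jacobi bracket `[f,g]_J` associated to an odd Jacobi structure `(S, Q)`,
for `f` homogeneous of parity `i`:
`[f,g]_J = (-1)^{|f|+1} {{S,f},g} - (-1)^{|f|+1} {Q, f g}`. -/
def oddJacobiBracket (psa : PoissonSuperalgebra P) (S Q : P) (i : ZMod 2) (f g : P) : P :=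
  zsign (i + 1) • psa.bracket (psa.bracket S f) g - zsign (i + 1) • psa.bracket Q (f * g)

/-- The Hamiltonian vector field of a homogeneous `f` of parity `i`, acting on `g`:
`X_f(g) = (-1)^{|f|} [f,g]_J - {Q,f}·g`. -/
def hamiltonianVF (psa : PoissonSuperalgebra P) (S Q : P) (i : ZMod 2) (f g : P) : P :=
  zsign i • oddJacobiBracket psa S Q i f g - psa.bracket Q f * g

/-- Part 1 of Theorem 2.1: the odd Jacobi bracket is graded antisymmetric in the
shifted parity: `[f,g]_J = -(-1)^{(|f|+1)(|g|+1)} [g,f]_J`. -/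
theorem oddJacobiBracket_antisymm
    (psa : PoissonSuperalgebra P) (A : Subalgebra ℝ P) (S Q : P)
    (hA_graded : ∀ a ∈ A, ∃ a₀ a₁ : P, a₀ ∈ A ∧ a₀ ∈ psa.grade 0 ∧
      a₁ ∈ A ∧ a₁ ∈ psa.grade 1 ∧ a = a₀ + a₁)
    (hA_bracket : ∀ f ∈ A, ∀ g ∈ A, psa.bracket f g = 0)
    (hS : S ∈ psa.grade 1) (hQ : Q ∈ psa.grade 1)
    (hQQ : psa.bracket Q Q = 0) (hQS : psa.bracket Q S = 0)
    (hSS : psa.bracket S S = -((2 : ℝ) • (Q * S)))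
    (hQA : ∀ f ∈ A, psa.bracket Q f ∈ A)
    (hSA : ∀ f ∈ A, ∀ g ∈ A, psa.bracket (psa.bracket S f) g ∈ A)
    {i j : ZMod 2} {f g : P} (hf : f ∈ A) (hfi : f ∈ psa.grade i)
    (hg : g ∈ A) (hgj : g ∈ psa.grade j) :
    oddJacobiBracket psa S Q i f g
      = -(zsign ((i + 1) * (j + 1)) • oddJacobiBracket psa S Q j g f) := by
  have h0 : psa.bracket f g = 0 := hA_bracket f hf g hg
  have hSg : psa.bracket S g ∈ psa.grade (1 + j) := psa.bracket_mem hS hgj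
  have hjac := psa.bracket_jacobi hS hfi hgj
  rw [h0, map_zero, psa.bracket_antisymm hfi hSg] at hjac
  have hA1 : psa.bracket (psa.bracket S f) g
      = zsign (1 * i) • zsign (i * (1 + j)) • psa.bracket (psa.bracket S g) f := by
    have h := eq_neg_of_add_eq_zero_left hjac.symm
    rw [h]
    simp [smul_neg]
  have hC : psa.bracket Q (g * f) = zsign (j * i) • psa.bracket Q (f * g) := by
    rw [psa.super_comm hgj hfi, map_smul]
  have hcase : ∀ k : ZMod 2, k = 0 ∨ k = 1 := by decide
  have z0 : zsign 0 = 1 := rfl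
  have z1 : zsign 1 = -1 := rfl
  have z2 : zsign 2 = 1 := by rw [show (2 : ZMod 2) = 0 from rfl]; rfl
  have z4 : zsign 4 = 1 := by rw [show (4 : ZMod 2) = 0 from rfl]; rfl
  rcases hcase i with hi | hi <;> rcases hcase j with hj | hj <;>
    subst hi <;> subst hj <;>
    simp only [oddJacobiBracket, hA1, hC] <;>
    norm_num [z0, z1, z2, z4, show ((1:ZMod 2)+1) = 0 from rfl, show ((0:ZMod 2)+1) = 1 from rfl,
      show ((1:ZMod 2)*1) = 1 from rfl] <;>
    module
end
end

section
/- Let f, g, h ∈ A be homogeneous. Then the odd Jacobi bracket satisfies the graded Jacobi identity: the cyclic sum over (f,g,h) of (-1)^{(|f|+1)(|h|+1)} [f,[g,h]_J]_J equals 0. (Part 2 of the theorem that the odd Jacobi bracket defines an odd Jacobi algebra on C^∞(M).) -/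
noncomputable section

variable {P : Type*} [Ring P] [Algebra ℝ P]

lemma zmod2_cases (m : ZMod 2) : m = 0 ∨ m = 1 := by revert m; decide

lemma bk_leib_left (psa : PoissonSuperalgebra P) {i j k : ZMod 2} {a b c : P}
    (ha : a ∈ psa.grade i) (hb : b ∈ psa.grade j) (hc : c ∈ psa.grade k) :
    psa.bracket (a * b) c
      = zsign (j * k) • (psa.bracket a c * b) + a * psa.bracket b c := by
  rw [psa.bracket_antisymm (psa.mul_mem ha hb) hc, psa.bracket_leibniz hc ha hb,
    psa.bracket_antisymm hc ha, psa.bracket_antisymm hc hb]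
  rcases zmod2_cases i with rfl|rfl <;> rcases zmod2_cases j with rfl|rfl <;>
    rcases zmod2_cases k with rfl|rfl <;>
    simp (config := { decide := true }) only [zsign, ite_true, ite_false, smul_smul, smul_sub, smul_add,
      smul_neg, neg_smul, mul_smul_comm, smul_mul_assoc, one_smul, neg_neg] <;>
    norm_num <;> module

section
variable {psa : PoissonSuperalgebra P} {A : Subalgebra ℝ P} {S Q : P}

/-- graded symmetry of the almost Lie bracket on A -/
lemma bkS_symm (hA_bracket : ∀ f ∈ A, ∀ g ∈ A, psa.bracket f g = 0)
    (hS : S ∈ psa.grade 1) {a b : ZMod 2} {x y : P} (hx : x ∈ A) (hxa : x ∈ psa.grade a)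
    (hy : y ∈ A) (hyb : y ∈ psa.grade b) :
    psa.bracket (psa.bracket S x) y
      = zsign (a * b) • psa.bracket (psa.bracket S y) x := by
  have hj := psa.bracket_jacobi hS hxa hyb
  rw [hA_bracket x hx y hy, map_zero] at hj
  have h2 : psa.bracket x (psa.bracket S y)
      = -(zsign (a * (1 + b)) • psa.bracket (psa.bracket S y) x) :=
    psa.bracket_antisymm hxa (psa.bracket_mem hS hyb)
  rw [h2] at hj
  have hj' := hj.symm
  rcases zmod2_cases a with rfl|rfl <;> rcases zmod2_cases b with rfl|rfl <;>
    simp (config := { decide := true }) only [zsign, ite_true, ite_false, smul_smul, smul_neg, neg_smul,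
      one_smul, neg_neg] at hj' ⊢ <;> linear_combination (norm := module) hj'

/-- D² = 0 -/
lemma bkQQ_zero (hQ : Q ∈ psa.grade 1) (hQQ : psa.bracket Q Q = 0) {m : ZMod 2} {x : P} (hxm : x ∈ psa.grade m) :
    psa.bracket Q (psa.bracket Q x) = 0 := by
  have hj := psa.bracket_jacobi hQ hQ hxm
  rw [hQQ, map_zero, LinearMap.zero_apply] at hj
  have : (2:ℝ) • psa.bracket Q (psa.bracket Q x) = 0 := by
    simp (config := { decide := true }) only [zsign, ite_true, ite_false, neg_smul, one_smul] at hj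
    linear_combination (norm := module) hj
  have h2 := smul_eq_zero.mp this
  rcases h2 with h | h
  · norm_num at h
  · exact h

/-- {Q,{S,x}} = -{S,{Q,x}} -/
lemma bkQS_swap (hS : S ∈ psa.grade 1) (hQ : Q ∈ psa.grade 1)
    (hQS : psa.bracket Q S = 0) {m : ZMod 2} {x : P} (hxm : x ∈ psa.grade m) :
    psa.bracket Q (psa.bracket S x) = -psa.bracket S (psa.bracket Q x) := by
  have hj := psa.bracket_jacobi hQ hS hxm
  rw [hQS, map_zero, LinearMap.zero_apply] at hj
  simp (config := { decide := true }) only [zsign, ite_true, ite_false, neg_smul, one_smul] at hj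
  linear_combination (norm := module) hj

/-- {S,{S,x}} = -{QS,x} -/
lemma bkSS_x (hS : S ∈ psa.grade 1)
    (hSS : psa.bracket S S = -((2 : ℝ) • (Q * S))) {m : ZMod 2} {x : P} (hxm : x ∈ psa.grade m) :
    psa.bracket S (psa.bracket S x) = -psa.bracket (Q * S) x := by
  have hj := psa.bracket_jacobi hS hS hxm
  rw [hSS] at hj
  simp only [map_neg, map_smul, LinearMap.neg_apply, LinearMap.smul_apply] at hj
  simp (config := { decide := true }) only [zsign, ite_true, ite_false, neg_smul, one_smul] at hj
  have : (2:ℝ) • psa.bracket S (psa.bracket S x)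
      = (2:ℝ) • (-psa.bracket (Q * S) x) := by linear_combination (norm := module) hj
  have h2 := smul_right_injective P (by norm_num : (2:ℝ) ≠ 0) this
  exact h2

/-- D of an S-bracket -/
lemma bkQ_bkS (hS : S ∈ psa.grade 1) (hQ : Q ∈ psa.grade 1)
    (hQS : psa.bracket Q S = 0) {b c : ZMod 2} {y z : P}
    (hyb : y ∈ psa.grade b) (hzc : z ∈ psa.grade c) :
    psa.bracket Q (psa.bracket (psa.bracket S y) z)
      = -psa.bracket (psa.bracket S (psa.bracket Q y)) z
        + zsign (b + 1) • psa.bracket (psa.bracket S y) (psa.bracket Q z) := by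
  have hj := psa.bracket_jacobi hQ (psa.bracket_mem hS hyb) hzc
  rw [bkQS_swap hS hQ hQS hyb] at hj
  simp only [map_neg, LinearMap.neg_apply] at hj
  rcases zmod2_cases b with rfl|rfl <;>
    simp (config := { decide := true }) only [zsign, ite_true, ite_false, neg_smul,
      one_smul, neg_neg] at hj ⊢ <;> linear_combination (norm := module) hj

/-- the bracket of two S-hamiltonians -/
lemma bkS_pair (hA_bracket : ∀ f ∈ A, ∀ g ∈ A, psa.bracket f g = 0)
    (hQA : ∀ f ∈ A, psa.bracket Q f ∈ A)
    (hS : S ∈ psa.grade 1) (hQ : Q ∈ psa.grade 1)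
    (hSS : psa.bracket S S = -((2 : ℝ) • (Q * S)))
    {a b : ZMod 2} {x y : P} (hx : x ∈ A) (hxa : x ∈ psa.grade a)
    (hy : y ∈ A) (hyb : y ∈ psa.grade b) :
    psa.bracket (psa.bracket S x) (psa.bracket S y)
      = -(psa.bracket Q x * psa.bracket S y)
        - zsign (a + a * b + b) • (psa.bracket Q y * psa.bracket S x)
        - zsign a • (Q * psa.bracket (psa.bracket S x) y)
        + zsign (a + 1) • psa.bracket S (psa.bracket (psa.bracket S x) y) := by
  have hj := psa.bracket_jacobi (psa.bracket_mem hS hxa) hS hyb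
  have e : psa.bracket (psa.bracket S x) S
      = -(zsign ((1 + a) * 1) • psa.bracket S (psa.bracket S x)) :=
    psa.bracket_antisymm (psa.bracket_mem hS hxa) hS
  rw [bkSS_x hS hSS hxa, bk_leib_left psa hQ hS hxa] at e
  rw [e] at hj
  simp only [map_neg, map_add, map_smul, LinearMap.neg_apply, LinearMap.add_apply,
    LinearMap.smul_apply] at hj
  have h4 : psa.bracket (psa.bracket Q x * S) y
      = zsign (1 * b) • (psa.bracket (psa.bracket Q x) y * S)
        + psa.bracket Q x * psa.bracket S y :=
    bk_leib_left psa (psa.bracket_mem hQ hxa) hS hyb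
  rw [hA_bracket _ (hQA x hx) _ hy] at h4
  have h5 : psa.bracket (Q * psa.bracket S x) y
      = zsign ((1 + a) * b) • (psa.bracket Q y * psa.bracket S x)
        + Q * psa.bracket (psa.bracket S x) y :=
    bk_leib_left psa hQ (psa.bracket_mem hS hxa) hyb
  rw [h4, h5] at hj
  rcases zmod2_cases a with rfl|rfl <;> rcases zmod2_cases b with rfl|rfl <;>
    simp (config := { decide := true }) only [zsign, ite_true, ite_false, neg_smul,
      one_smul, neg_neg, smul_add, smul_neg, smul_smul, zero_mul, zero_smul,
      zero_add] at hj ⊢ <;> linear_combination (norm := module) hj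

/-- the nested S-bracket relation -/
lemma bkS_nested (hA_bracket : ∀ f ∈ A, ∀ g ∈ A, psa.bracket f g = 0)
    (hQA : ∀ f ∈ A, psa.bracket Q f ∈ A)
    (hSA : ∀ f ∈ A, ∀ g ∈ A, psa.bracket (psa.bracket S f) g ∈ A)
    (hS : S ∈ psa.grade 1) (hQ : Q ∈ psa.grade 1)
    (hSS : psa.bracket S S = -((2 : ℝ) • (Q * S)))
    {a b c : ZMod 2} {x y z : P} (hx : x ∈ A) (hxa : x ∈ psa.grade a)
    (hy : y ∈ A) (hyb : y ∈ psa.grade b) (hz : z ∈ A) (hzc : z ∈ psa.grade c) :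
    psa.bracket (psa.bracket S x) (psa.bracket (psa.bracket S y) z)
      = -(psa.bracket Q x * psa.bracket (psa.bracket S y) z)
        - zsign (a + a * b + b) • (psa.bracket Q y * psa.bracket (psa.bracket S x) z)
        - zsign (a + a * c + b * c + c) •
            (psa.bracket Q z * psa.bracket (psa.bracket S x) y)
        + zsign (a + 1) •
            psa.bracket (psa.bracket S (psa.bracket (psa.bracket S x) y)) z
        + zsign ((a + 1) * (b + 1)) •
            psa.bracket (psa.bracket S y) (psa.bracket (psa.bracket S x) z) := by
  have hj := psa.bracket_jacobi (psa.bracket_mem hS hxa) (psa.bracket_mem hS hyb) hzc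
  rw [bkS_pair hA_bracket hQA hS hQ hSS hx hxa hy hyb] at hj
  simp only [map_neg, map_add, map_sub, map_smul, LinearMap.neg_apply, LinearMap.add_apply,
    LinearMap.sub_apply, LinearMap.smul_apply] at hj
  have h4 : psa.bracket (psa.bracket Q x * psa.bracket S y) z
      = zsign ((1 + b) * c) • (psa.bracket (psa.bracket Q x) z * psa.bracket S y)
        + psa.bracket Q x * psa.bracket (psa.bracket S y) z :=
    bk_leib_left psa (psa.bracket_mem hQ hxa) (psa.bracket_mem hS hyb) hzc
  rw [hA_bracket _ (hQA x hx) _ hz] at h4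
  have h5 : psa.bracket (psa.bracket Q y * psa.bracket S x) z
      = zsign ((1 + a) * c) • (psa.bracket (psa.bracket Q y) z * psa.bracket S x)
        + psa.bracket Q y * psa.bracket (psa.bracket S x) z :=
    bk_leib_left psa (psa.bracket_mem hQ hyb) (psa.bracket_mem hS hxa) hzc
  rw [hA_bracket _ (hQA y hy) _ hz] at h5
  have h6 : psa.bracket (Q * psa.bracket (psa.bracket S x) y) z
      = zsign ((1 + a + b) * c) • (psa.bracket Q z * psa.bracket (psa.bracket S x) y)
        + Q * psa.bracket (psa.bracket (psa.bracket S x) y) z :=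
    bk_leib_left psa hQ (psa.bracket_mem (psa.bracket_mem hS hxa) hyb) hzc
  rw [hA_bracket _ (hSA x hx y hy) _ hz] at h6
  rw [h4, h5, h6] at hj
  rcases zmod2_cases a with rfl|rfl <;> rcases zmod2_cases b with rfl|rfl <;>
    rcases zmod2_cases c with rfl|rfl <;>
    simp (config := { decide := true }) only [zsign, ite_true, ite_false, neg_smul,
      one_smul, neg_neg, smul_add, smul_neg, smul_smul, zero_mul, zero_smul,
      zero_add, mul_zero] at hj ⊢ <;> linear_combination (norm := module) hj


/-- raw expansion of the double odd Jacobi bracket -/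
lemma expandJJ (hA_bracket : ∀ f ∈ A, ∀ g ∈ A, psa.bracket f g = 0)
    (hS : S ∈ psa.grade 1) (hQ : Q ∈ psa.grade 1)
    (hQQ : psa.bracket Q Q = 0) (hQS : psa.bracket Q S = 0)
    {a b c : ZMod 2} {x y z : P} (hxa : x ∈ psa.grade a)
    (hyb : y ∈ psa.grade b) (hzc : z ∈ psa.grade c) :
    oddJacobiBracket psa S Q a x (oddJacobiBracket psa S Q b y z)
      = zsign (a + b) • (
          psa.bracket (psa.bracket S x) (psa.bracket (psa.bracket S y) z)
          - psa.bracket (psa.bracket S x) (psa.bracket Q y) * z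
          - zsign ((a + 1) * (b + 1)) •
              (psa.bracket Q y * psa.bracket (psa.bracket S x) z)
          - zsign b • (psa.bracket (psa.bracket S x) y * psa.bracket Q z)
          - zsign (a * b) • (y * psa.bracket (psa.bracket S x) (psa.bracket Q z))
          - psa.bracket Q x * psa.bracket (psa.bracket S y) z
          + psa.bracket Q x * (psa.bracket Q y * z)
          + zsign b • (psa.bracket Q x * (y * psa.bracket Q z))
          + zsign a • (x * psa.bracket (psa.bracket S (psa.bracket Q y)) z)
          + zsign (a + b) •
              (x * psa.bracket (psa.bracket S y) (psa.bracket Q z))) := by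
  have w1 : psa.bracket Q (y * z)
      = psa.bracket Q y * z + zsign (1 * b) • (y * psa.bracket Q z) :=
    psa.bracket_leibniz hQ hyb hzc
  have ea : psa.bracket (psa.bracket S x) (psa.bracket Q y * z)
      = psa.bracket (psa.bracket S x) (psa.bracket Q y) * z
        + zsign ((1 + a) * (1 + b)) •
            (psa.bracket Q y * psa.bracket (psa.bracket S x) z) :=
    psa.bracket_leibniz (psa.bracket_mem hS hxa) (psa.bracket_mem hQ hyb) hzc
  have eb : psa.bracket (psa.bracket S x) (y * psa.bracket Q z)
      = psa.bracket (psa.bracket S x) y * psa.bracket Q z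
        + zsign ((1 + a) * b) •
            (y * psa.bracket (psa.bracket S x) (psa.bracket Q z)) :=
    psa.bracket_leibniz (psa.bracket_mem hS hxa) hyb (psa.bracket_mem hQ hzc)
  have ec0 : psa.bracket Q (x * psa.bracket (psa.bracket S y) z)
      = psa.bracket Q x * psa.bracket (psa.bracket S y) z
        + zsign (1 * a) •
            (x * psa.bracket Q (psa.bracket (psa.bracket S y) z)) :=
    psa.bracket_leibniz hQ hxa (psa.bracket_mem (psa.bracket_mem hS hyb) hzc)
  have ebk := bkQ_bkS (psa := psa) hS hQ hQS hyb hzc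
  have ed1 : psa.bracket Q (x * (psa.bracket Q y * z))
      = psa.bracket Q x * (psa.bracket Q y * z)
        + zsign (1 * a) • (x * psa.bracket Q (psa.bracket Q y * z)) :=
    psa.bracket_leibniz hQ hxa (psa.mul_mem (psa.bracket_mem hQ hyb) hzc)
  have ee1 : psa.bracket Q (psa.bracket Q y * z)
      = zsign (1 * (1 + b)) • (psa.bracket Q y * psa.bracket Q z) := by
    have := psa.bracket_leibniz hQ (psa.bracket_mem hQ hyb) hzc
    rw [bkQQ_zero hQ hQQ hyb, zero_mul, zero_add] at this
    exact this
  have ed2 : psa.bracket Q (x * (y * psa.bracket Q z))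
      = psa.bracket Q x * (y * psa.bracket Q z)
        + zsign (1 * a) • (x * psa.bracket Q (y * psa.bracket Q z)) :=
    psa.bracket_leibniz hQ hxa (psa.mul_mem hyb (psa.bracket_mem hQ hzc))
  have ee2 : psa.bracket Q (y * psa.bracket Q z)
      = psa.bracket Q y * psa.bracket Q z := by
    have := psa.bracket_leibniz hQ hyb (psa.bracket_mem hQ hzc)
    rw [bkQQ_zero hQ hQQ hzc, mul_zero, smul_zero, add_zero] at this
    exact this
  simp only [oddJacobiBracket, smul_sub, mul_sub, mul_smul_comm, map_sub, map_smul,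
    LinearMap.sub_apply, LinearMap.smul_apply]
  rw [w1]
  simp only [mul_add, mul_smul_comm, map_add, map_smul]
  rw [ea, eb, ec0, ebk, ed1, ee1, ed2, ee2]
  rcases zmod2_cases a with rfl|rfl <;> rcases zmod2_cases b with rfl|rfl <;>
    simp (config := { decide := true }) only [zsign, ite_true, ite_false, neg_smul,
      one_smul, neg_neg, smul_add, smul_sub, smul_neg, smul_smul, mul_neg, neg_mul,
      mul_add, mul_sub, mul_smul_comm, smul_mul_assoc,
      mul_one, one_mul] <;> norm_num <;> module

end

set_option maxHeartbeats 4000000 in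
/-- Part 2 of Theorem 2.1: the odd Jacobi bracket satisfies the graded Jacobi identity:
the cyclic sum over `(f,g,h)` of `(-1)^{(|f|+1)(|h|+1)} [f,[g,h]_J]_J` vanishes. -/
theorem oddJacobiBracket_jacobi
    (psa : PoissonSuperalgebra P) (A : Subalgebra ℝ P) (S Q : P)
    (hA_graded : ∀ a ∈ A, ∃ a₀ a₁ : P, a₀ ∈ A ∧ a₀ ∈ psa.grade 0 ∧
      a₁ ∈ A ∧ a₁ ∈ psa.grade 1 ∧ a = a₀ + a₁)
    (hA_bracket : ∀ f ∈ A, ∀ g ∈ A, psa.bracket f g = 0)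
    (hS : S ∈ psa.grade 1) (hQ : Q ∈ psa.grade 1)
    (hQQ : psa.bracket Q Q = 0) (hQS : psa.bracket Q S = 0)
    (hSS : psa.bracket S S = -((2 : ℝ) • (Q * S)))
    (hQA : ∀ f ∈ A, psa.bracket Q f ∈ A)
    (hSA : ∀ f ∈ A, ∀ g ∈ A, psa.bracket (psa.bracket S f) g ∈ A)
    {i j k : ZMod 2} {f g h : P} (hf : f ∈ A) (hfi : f ∈ psa.grade i)
    (hg : g ∈ A) (hgj : g ∈ psa.grade j) (hh : h ∈ A) (hhk : h ∈ psa.grade k) :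
    zsign ((i + 1) * (k + 1)) •
        oddJacobiBracket psa S Q i f (oddJacobiBracket psa S Q j g h)
      + zsign ((j + 1) * (i + 1)) •
          oddJacobiBracket psa S Q j g (oddJacobiBracket psa S Q k h f)
      + zsign ((k + 1) * (j + 1)) •
          oddJacobiBracket psa S Q k h (oddJacobiBracket psa S Q i f g)
      = 0 := by
  -- abbreviations for memberships
  have hDf : psa.bracket Q f ∈ A := hQA f hf
  have hDg : psa.bracket Q g ∈ A := hQA g hg
  have hDh : psa.bracket Q h ∈ A := hQA h hh
  have hDfi : psa.bracket Q f ∈ psa.grade (1 + i) := psa.bracket_mem hQ hfi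
  have hDgj : psa.bracket Q g ∈ psa.grade (1 + j) := psa.bracket_mem hQ hgj
  have hDhk : psa.bracket Q h ∈ psa.grade (1 + k) := psa.bracket_mem hQ hhk
  have hfg : psa.bracket (psa.bracket S f) g ∈ A := hSA f hf g hg
  have hfgm : psa.bracket (psa.bracket S f) g ∈ psa.grade (1 + i + j) :=
    psa.bracket_mem (psa.bracket_mem hS hfi) hgj
  -- the three expansions
  have e1 := expandJJ hA_bracket hS hQ hQQ hQS hfi hgj hhk
  have e2 := expandJJ hA_bracket hS hQ hQQ hQS hgj hhk hfi
  have e3 := expandJJ hA_bracket hS hQ hQQ hQS hhk hfi hgj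
  have nb := bkS_nested hA_bracket hQA hSA hS hQ hSS hf hfi hg hgj hh hhk
  -- symmetry conversions
  have cv3 := bkS_symm hA_bracket hS hh hhk hf hfi
  have cv5 := bkS_symm hA_bracket hS hg hgj hf hfi
  have cv12 := bkS_symm hA_bracket hS hh hhk hfg hfgm
  have cv14 := bkS_symm hA_bracket hS hh hhk hg hgj
  have cv16 := bkS_symm hA_bracket hS hh hhk hDg hDgj
  have cv17 := bkS_symm hA_bracket hS hDf hDfi hg hgj
  have cvT2i := bkS_symm hA_bracket hS hDh hDhk hf hfi
  -- commutation conversions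
  have cv1 := psa.super_comm (psa.bracket_mem (psa.bracket_mem hS hfi) hDgj) hhk
  have cv2 := psa.super_comm (psa.bracket_mem (psa.bracket_mem hS hfi) hgj) hDhk
  have cv4 := psa.super_comm (psa.bracket_mem (psa.bracket_mem hS hgj) hDhk) hfi
  have cv6 := psa.super_comm (psa.bracket_mem (psa.bracket_mem hS hgj) hhk) hDfi
  have cv13 := psa.super_comm (psa.bracket_mem (psa.bracket_mem hS hhk) hDfi) hgj
  have cv15 := psa.super_comm (psa.bracket_mem (psa.bracket_mem hS hfi) hhk) hDgj
  have cvT3g : psa.bracket Q h * (psa.bracket Q f * g)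
      = zsign ((1 + k) * (1 + i + j)) •
          (psa.bracket Q f * (g * psa.bracket Q h)) := by
    rw [psa.super_comm hDhk (psa.mul_mem hDfi hgj), mul_assoc]
  have cvT2h : psa.bracket Q g * (h * psa.bracket Q f)
      = zsign ((1 + i) * (1 + j + k)) •
          (psa.bracket Q f * (psa.bracket Q g * h)) := by
    rw [psa.super_comm hhk hDfi, mul_smul_comm,
      psa.super_comm hDgj (psa.mul_mem hDfi hhk), mul_assoc, psa.super_comm hhk hDgj]
    rcases zmod2_cases i with rfl|rfl <;> rcases zmod2_cases j with rfl|rfl <;>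
      rcases zmod2_cases k with rfl|rfl <;>
      simp (config := { decide := true }) only [zsign, ite_true, ite_false, neg_smul,
        one_smul, neg_neg, smul_smul, smul_neg, mul_smul_comm, smul_mul_assoc] <;>
      norm_num <;> module
  have cvT3h : psa.bracket Q h * (f * psa.bracket Q g)
      = zsign ((1 + j) * (i + 1 + k)) •
          (psa.bracket Q g * (psa.bracket Q h * f)) := by
    rw [psa.super_comm hfi hDgj, mul_smul_comm,
      psa.super_comm hDhk (psa.mul_mem hDgj hfi), mul_assoc, psa.super_comm hfi hDhk]
    rcases zmod2_cases i with rfl|rfl <;> rcases zmod2_cases j with rfl|rfl <;>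
      rcases zmod2_cases k with rfl|rfl <;>
      simp (config := { decide := true }) only [zsign, ite_true, ite_false, neg_smul,
        one_smul, neg_neg, smul_smul, smul_neg, mul_smul_comm, smul_mul_assoc] <;>
      norm_num <;> module
  rw [e1, e2, e3, nb, cv3, cv5, cv12, cv14, cv16, cv17, cvT2i]
  simp only [smul_mul_assoc, mul_smul_comm, map_smul]
  rw [cv1, cv2, cv4, cv6, cv13, cv15, cvT2h, cvT3g, cvT3h]
  rcases zmod2_cases i with rfl|rfl <;> rcases zmod2_cases j with rfl|rfl <;>
    rcases zmod2_cases k with rfl|rfl <;>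
    simp (config := { decide := true }) only [zsign, ite_true, ite_false, neg_smul,
      one_smul, neg_neg, smul_add, smul_sub, smul_neg, smul_smul, mul_neg, neg_mul,
      mul_add, mul_sub, mul_smul_comm, smul_mul_assoc, mul_one, one_mul] <;>
    norm_num <;> module
end
end

section
/- Let Φ : P → P be a parity-preserving ℝ-algebra automorphism with Φ({a,b}) = {Φ(a),Φ(b)} for all a, b ∈ P and Φ(A) ⊆ A. If Φ(S) = S and Φ(𝒬) = 𝒬, then the Hamiltonian vector fields X_f and X_{Φ(f)} are Φ-related: Φ(X_f(g)) = X_{Φ(f)}(Φ(g)) for all homogeneous f ∈ A and all g ∈ A. (This is the implication (2) ⟹ (3) of the proposition characterising odd Jacobi automorphisms.) -/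
noncomputable section

variable {P : Type*} [Ring P] [Algebra ℝ P]

/-- (2) ⟹ (3) of the proposition on odd Jacobi automorphisms: if the parity-preserving,
bracket-preserving algebra automorphism `Φ` fixes `S` and `Q`, then `X_f` and `X_{Φ(f)}`
are `Φ`-related: `Φ(X_f(g)) = X_{Φ(f)}(Φ(g))`. -/
theorem hamiltonianVF_phi_related
    (psa : PoissonSuperalgebra P) (A : Subalgebra ℝ P) (S Q : P)
    (hA_graded : ∀ a ∈ A, ∃ a₀ a₁ : P, a₀ ∈ A ∧ a₀ ∈ psa.grade 0 ∧
      a₁ ∈ A ∧ a₁ ∈ psa.grade 1 ∧ a = a₀ + a₁)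
    (hA_bracket : ∀ f ∈ A, ∀ g ∈ A, psa.bracket f g = 0)
    (hS : S ∈ psa.grade 1) (hQ : Q ∈ psa.grade 1)
    (hQQ : psa.bracket Q Q = 0) (hQS : psa.bracket Q S = 0)
    (hSS : psa.bracket S S = -((2 : ℝ) • (Q * S)))
    (hQA : ∀ f ∈ A, psa.bracket Q f ∈ A)
    (hSA : ∀ f ∈ A, ∀ g ∈ A, psa.bracket (psa.bracket S f) g ∈ A)
    (Φ : P ≃ₐ[ℝ] P)
    (hΦ_grade : ∀ (i : ZMod 2), ∀ a ∈ psa.grade i, Φ a ∈ psa.grade i)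
    (hΦ_bracket : ∀ a b : P, Φ (psa.bracket a b) = psa.bracket (Φ a) (Φ b))
    (hΦA : ∀ a ∈ A, Φ a ∈ A)
    (hΦS : Φ S = S) (hΦQ : Φ Q = Q)
    {i : ZMod 2} {f g : P} (hf : f ∈ A) (hfi : f ∈ psa.grade i) (hg : g ∈ A) :
    Φ (hamiltonianVF psa S Q i f g) = hamiltonianVF psa S Q i (Φ f) (Φ g) := by
  simp only [hamiltonianVF, oddJacobiBracket, map_sub, map_smul, map_mul,
    hΦ_bracket, hΦS, hΦQ]
end
end

section
/- Let χ ∈ P be a Jacobi element with induced map X(f) = {χ,f}. Then X is a derivation over the odd Jacobi bracket: X([f,g]_J) = [X(f),g]_J + (-1)^{|χ|(|f|+1)} [f,X(g)]_J for all homogeneous f ∈ A and all g ∈ A. (This is the implication (1) ⟹ (2) of the lemma characterising Jacobi vector fields on an odd Jacobi manifold.) -/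
noncomputable section

variable {P : Type*} [Ring P] [Algebra ℝ P]

lemma oJB_add_right (psa : PoissonSuperalgebra P) (S Q : P) (i : ZMod 2) (f a b : P) :
    oddJacobiBracket psa S Q i f (a + b)
      = oddJacobiBracket psa S Q i f a + oddJacobiBracket psa S Q i f b := by
  simp only [oddJacobiBracket, mul_add, map_add, smul_add]
  abel

lemma jacobiElement_derivation_homog (psa : PoissonSuperalgebra P) (S Q : P)
    (hS : S ∈ psa.grade 1) (hQ : Q ∈ psa.grade 1)
    {c : ZMod 2} {χ : P} (hχ : χ ∈ psa.grade c)
    (hχS : psa.bracket χ S = 0) (hχQ : psa.bracket χ Q = 0)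
    {i : ZMod 2} {f : P} (hfi : f ∈ psa.grade i)
    {j : ZMod 2} {g : P} (hgj : g ∈ psa.grade j) :
    psa.bracket χ (oddJacobiBracket psa S Q i f g)
      = oddJacobiBracket psa S Q (c + i) (psa.bracket χ f) g
        + zsign (c * (i + 1)) • oddJacobiBracket psa S Q i f (psa.bracket χ g) := by
  have hSf := psa.bracket_mem hS hfi
  have hfg := psa.mul_mem hfi hgj
  simp only [oddJacobiBracket, map_sub, map_smul,
    psa.bracket_jacobi hχ hSf hgj, psa.bracket_jacobi hχ hS hfi,
    psa.bracket_jacobi hχ hQ hfg, psa.bracket_leibniz hχ hfi hgj,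
    hχS, hχQ, LinearMap.map_zero₂, zero_add, map_add, map_smul, smul_add, smul_sub,
    smul_smul, LinearMap.add_apply, LinearMap.smul_apply]
  have htwo : ∀ x : ZMod 2, x = 0 ∨ x = 1 := by decide
  rcases htwo c with rfl | rfl <;> rcases htwo i with rfl | rfl <;>
    rcases htwo j with rfl | rfl <;>
    simp +decide [zsign, neg_smul, one_smul] <;> module

/-- (1) ⟹ (2) of the lemma on Jacobi vector fields: a Jacobi element `χ` induces a
derivation over the odd Jacobi bracket:
`X([f,g]_J) = [X(f),g]_J + (-1)^{|χ|(|f|+1)} [f,X(g)]_J`. -/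
theorem jacobiElement_derivation
    (psa : PoissonSuperalgebra P) (A : Subalgebra ℝ P) (S Q : P)
    (hA_graded : ∀ a ∈ A, ∃ a₀ a₁ : P, a₀ ∈ A ∧ a₀ ∈ psa.grade 0 ∧
      a₁ ∈ A ∧ a₁ ∈ psa.grade 1 ∧ a = a₀ + a₁)
    (hA_bracket : ∀ f ∈ A, ∀ g ∈ A, psa.bracket f g = 0)
    (hS : S ∈ psa.grade 1) (hQ : Q ∈ psa.grade 1)
    (hQQ : psa.bracket Q Q = 0) (hQS : psa.bracket Q S = 0)
    (hSS : psa.bracket S S = -((2 : ℝ) • (Q * S)))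
    (hQA : ∀ f ∈ A, psa.bracket Q f ∈ A)
    (hSA : ∀ f ∈ A, ∀ g ∈ A, psa.bracket (psa.bracket S f) g ∈ A)
    {c : ZMod 2} {χ : P} (hχ : χ ∈ psa.grade c)
    (hχS : psa.bracket χ S = 0) (hχQ : psa.bracket χ Q = 0)
    (hχA : ∀ a ∈ A, psa.bracket χ a ∈ A)
    {i : ZMod 2} {f g : P} (hf : f ∈ A) (hfi : f ∈ psa.grade i) (hg : g ∈ A) :
    psa.bracket χ (oddJacobiBracket psa S Q i f g)
      = oddJacobiBracket psa S Q (c + i) (psa.bracket χ f) g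
        + zsign (c * (i + 1)) • oddJacobiBracket psa S Q i f (psa.bracket χ g) := by
  obtain ⟨g₀, g₁, hg₀A, hg₀, hg₁A, hg₁, rfl⟩ := hA_graded g hg
  rw [oJB_add_right, map_add, map_add, oJB_add_right, oJB_add_right,
    jacobiElement_derivation_homog psa S Q hS hQ hχ hχS hχQ hfi hg₀,
    jacobiElement_derivation_homog psa S Q hS hQ hχ hχS hχQ hfi hg₁, smul_add]
  abel
end
end

section
/- Let χ ∈ P be a Jacobi element with induced map X(f) = {χ,f}. Then for every homogeneous f ∈ A the graded commutator of X with the Hamiltonian vector field X_f satisfies [X, X_f] = (-1)^{|χ|} X_{X(f)}; explicitly, X(X_f(g)) - (-1)^{|χ|(|f|+1)} X_f(X(g)) = (-1)^{|χ|} X_{X(f)}(g) for all g ∈ A. (This is the implication (1) ⟹ (3) of the lemma characterising Jacobi vector fields on an odd Jacobi manifold.) -/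
/-!
For homogeneous `g` the identity is a direct computation: the Leibniz rule for `Q` turns
`X_f(g)` into `(-1)^{|f|} f {Q,g} - {{S,f},g}`, and because `{χ,S} = {χ,Q} = 0` the Jacobi
identity lets `X = {χ,·}` move past `{S,·}` and `{Q,·}` at the cost of the sign `(-1)^{|χ|}`.
Both sides are additive in `g`, and every element of `P` is a sum of an even and an odd one.
-/

noncomputable section

variable {P : Type*} [Ring P] [Algebra ℝ P]

theorem zsign_zero : zsign 0 = 1 := if_pos rfl

theorem zsign_one : zsign 1 = -1 := if_neg one_ne_zero

theorem zsign_add (i j : ZMod 2) : zsign (i + j) = zsign i * zsign j := by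
  have parity : ∀ k : ZMod 2, k = 0 ∨ k = 1 := by decide
  rcases parity i with rfl | rfl <;> rcases parity j with rfl | rfl <;>
    simp [zsign_zero, zsign_one, CharTwo.add_self_eq_zero]

theorem zsign_add_one (i : ZMod 2) : zsign (i + 1) = -zsign i := by
  rw [zsign_add, zsign_one, mul_neg_one]

theorem zsign_mul_self (i : ZMod 2) : zsign i * zsign i = 1 := by
  rw [← zsign_add, CharTwo.add_self_eq_zero, zsign_zero]

namespace PoissonSuperalgebra

variable (psa : PoissonSuperalgebra P)

theorem exists_even_add_odd (a : P) :
    ∃ a₀ ∈ psa.grade 0, ∃ a₁ ∈ psa.grade 1, a₀ + a₁ = a :=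
  Submodule.mem_sup.mp (psa.sup_grade ▸ Submodule.mem_top)

variable {psa}

theorem bracket_bracket_of_bracket_eq_zero {c k j : ZMod 2} {χ b a : P}
    (hχ : χ ∈ psa.grade c) (hb : b ∈ psa.grade k) (ha : a ∈ psa.grade j)
    (hχb : psa.bracket χ b = 0) :
    psa.bracket χ (psa.bracket b a) = zsign (c * k) • psa.bracket b (psa.bracket χ a) := by
  rw [psa.bracket_jacobi hχ hb ha, hχb, map_zero, LinearMap.zero_apply, zero_add]

end PoissonSuperalgebra

theorem hamiltonianVF_add_right (psa : PoissonSuperalgebra P) (S Q : P) (i : ZMod 2)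
    (f g₀ g₁ : P) :
    hamiltonianVF psa S Q i f (g₀ + g₁)
      = hamiltonianVF psa S Q i f g₀ + hamiltonianVF psa S Q i f g₁ := by
  simp only [hamiltonianVF, oddJacobiBracket, mul_add, map_add, smul_add]
  module

theorem hamiltonianVF_eq_of_mem_grade {psa : PoissonSuperalgebra P} {S Q : P}
    (hQ : Q ∈ psa.grade 1) {i j : ZMod 2} {f g : P} (hf : f ∈ psa.grade i)
    (hg : g ∈ psa.grade j) :
    hamiltonianVF psa S Q i f g
      = zsign i • (f * psa.bracket Q g) - psa.bracket (psa.bracket S f) g := by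
  rw [hamiltonianVF, oddJacobiBracket, psa.bracket_leibniz hQ hf hg, one_mul, zsign_add_one,
    smul_sub, smul_smul, smul_smul, mul_neg, zsign_mul_self]
  module

theorem bracket_hamiltonianVF_of_mem_grade {psa : PoissonSuperalgebra P} {S Q : P}
    (hS : S ∈ psa.grade 1) (hQ : Q ∈ psa.grade 1) {c : ZMod 2} {χ : P} (hχ : χ ∈ psa.grade c)
    (hχS : psa.bracket χ S = 0) (hχQ : psa.bracket χ Q = 0)
    {i j : ZMod 2} {f g : P} (hf : f ∈ psa.grade i) (hg : g ∈ psa.grade j) :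
    psa.bracket χ (hamiltonianVF psa S Q i f g)
      - zsign (c * (i + 1)) • hamiltonianVF psa S Q i f (psa.bracket χ g)
      = zsign c • hamiltonianVF psa S Q (c + i) (psa.bracket χ f) g := by
  have hχf := psa.bracket_mem hχ hf
  have hχg := psa.bracket_mem hχ hg
  have hQ_comm : psa.bracket χ (psa.bracket Q g) = zsign c • psa.bracket Q (psa.bracket χ g) := by
    simpa only [mul_one] using psa.bracket_bracket_of_bracket_eq_zero hχ hQ hg hχQ
  have hS_comm : psa.bracket χ (psa.bracket S f) = zsign c • psa.bracket S (psa.bracket χ f) := by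
    simpa only [mul_one] using psa.bracket_bracket_of_bracket_eq_zero hχ hS hf hχS
  rw [hamiltonianVF_eq_of_mem_grade hQ hf hg, hamiltonianVF_eq_of_mem_grade hQ hf hχg,
    hamiltonianVF_eq_of_mem_grade hQ hχf hg, map_sub, map_smul,
    psa.bracket_leibniz hχ hf (psa.bracket_mem hQ hg), hQ_comm,
    psa.bracket_jacobi hχ (psa.bracket_mem hS hf) hg, hS_comm]
  simp only [map_smul, LinearMap.smul_apply, mul_smul_comm, mul_add, mul_one, zsign_add]
  -- the `{χ,f} {Q,g}` terms match because `(-1)^{|χ|} (-1)^{|χ|+|f|} = (-1)^{|f|}`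
  linear_combination (norm := module)
    (zsign_mul_self c).symm • (zsign i • (psa.bracket χ f * psa.bracket Q g))

theorem jacobiElement_hamiltonian_commutator_general
    (psa : PoissonSuperalgebra P) (S Q : P)
    (hS : S ∈ psa.grade 1) (hQ : Q ∈ psa.grade 1)
    {c : ZMod 2} {χ : P} (hχ : χ ∈ psa.grade c)
    (hχS : psa.bracket χ S = 0) (hχQ : psa.bracket χ Q = 0)
    {i : ZMod 2} {f g : P} (hfi : f ∈ psa.grade i) :
    psa.bracket χ (hamiltonianVF psa S Q i f g)
      - zsign (c * (i + 1)) • hamiltonianVF psa S Q i f (psa.bracket χ g)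
      = zsign c • hamiltonianVF psa S Q (c + i) (psa.bracket χ f) g := by
  obtain ⟨g₀, hg₀, g₁, hg₁, rfl⟩ := psa.exists_even_add_odd g
  have even_part := bracket_hamiltonianVF_of_mem_grade hS hQ hχ hχS hχQ hfi hg₀
  have odd_part := bracket_hamiltonianVF_of_mem_grade hS hQ hχ hχS hχQ hfi hg₁
  simp only [map_add, hamiltonianVF_add_right, smul_add, ← even_part, ← odd_part]
  abel

/-- (1) ⟹ (3) of the lemma on Jacobi vector fields: for a Jacobi element `χ` with induced
map `X = {χ,·}`, the graded commutator satisfies `[X, X_f] = (-1)^{|χ|} X_{X(f)}`: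
`X(X_f(g)) - (-1)^{|χ|(|f|+1)} X_f(X(g)) = (-1)^{|χ|} X_{X(f)}(g)`. -/
theorem jacobiElement_hamiltonian_commutator
    (psa : PoissonSuperalgebra P) (A : Subalgebra ℝ P) (S Q : P)
    (hA_graded : ∀ a ∈ A, ∃ a₀ a₁ : P, a₀ ∈ A ∧ a₀ ∈ psa.grade 0 ∧
      a₁ ∈ A ∧ a₁ ∈ psa.grade 1 ∧ a = a₀ + a₁)
    (hA_bracket : ∀ f ∈ A, ∀ g ∈ A, psa.bracket f g = 0)
    (hS : S ∈ psa.grade 1) (hQ : Q ∈ psa.grade 1)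
    (hQQ : psa.bracket Q Q = 0) (hQS : psa.bracket Q S = 0)
    (hSS : psa.bracket S S = -((2 : ℝ) • (Q * S)))
    (hQA : ∀ f ∈ A, psa.bracket Q f ∈ A)
    (hSA : ∀ f ∈ A, ∀ g ∈ A, psa.bracket (psa.bracket S f) g ∈ A)
    {c : ZMod 2} {χ : P} (hχ : χ ∈ psa.grade c)
    (hχS : psa.bracket χ S = 0) (hχQ : psa.bracket χ Q = 0)
    (hχA : ∀ a ∈ A, psa.bracket χ a ∈ A)
    {i : ZMod 2} {f g : P} (hf : f ∈ A) (hfi : f ∈ psa.grade i) (hg : g ∈ A) :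
    psa.bracket χ (hamiltonianVF psa S Q i f g)
      - zsign (c * (i + 1)) • hamiltonianVF psa S Q i f (psa.bracket χ g)
      = zsign c • hamiltonianVF psa S Q (c + i) (psa.bracket χ f) g :=
  jacobiElement_hamiltonian_commutator_general psa S Q hS hQ hχ hχS hχQ hfi
end
end

section
/- The homological vector field is a derivation over the odd Jacobi bracket: writing Q(f) := {𝒬,f} for f ∈ A, one has Q([f,g]_J) = [Q(f),g]_J + (-1)^{|f|+1} [f,Q(g)]_J for all homogeneous f ∈ A and all g ∈ A. (Part 1 of the corollary on the homological vector field of an odd Jacobi manifold.) -/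
noncomputable section

variable {P : Type*} [Ring P] [Algebra ℝ P]

lemma PoissonSuperalgebra.decomp (psa : PoissonSuperalgebra P) (x : P) :
    ∃ a b : P, a ∈ psa.grade 0 ∧ b ∈ psa.grade 1 ∧ x = a + b := by
  have hx : x ∈ psa.grade 0 ⊔ psa.grade 1 := by rw [psa.sup_grade]; trivial
  rcases Submodule.mem_sup.mp hx with ⟨a, ha, b, hb, hab⟩
  exact ⟨a, b, ha, hb, hab.symm⟩

lemma PoissonSuperalgebra.leibniz' (psa : PoissonSuperalgebra P) {i j : ZMod 2} {a b : P}
    (ha : a ∈ psa.grade i) (hb : b ∈ psa.grade j) (c : P) :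
    psa.bracket a (b * c) = psa.bracket a b * c + zsign (i * j) • (b * psa.bracket a c) := by
  obtain ⟨c0, c1, h0, h1, rfl⟩ := psa.decomp c
  rw [mul_add, map_add, psa.bracket_leibniz ha hb h0, psa.bracket_leibniz ha hb h1,
    map_add, mul_add, mul_add, smul_add]
  abel

lemma PoissonSuperalgebra.jacobi' (psa : PoissonSuperalgebra P) {i j : ZMod 2} {a b : P}
    (ha : a ∈ psa.grade i) (hb : b ∈ psa.grade j) (c : P) :
    psa.bracket a (psa.bracket b c)
      = psa.bracket (psa.bracket a b) c + zsign (i * j) • psa.bracket b (psa.bracket a c) := by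
  obtain ⟨c0, c1, h0, h1, rfl⟩ := psa.decomp c
  rw [map_add, map_add, psa.bracket_jacobi ha hb h0, psa.bracket_jacobi ha hb h1,
    map_add, map_add, map_add, smul_add]
  abel

lemma PoissonSuperalgebra.QQ_zero (psa : PoissonSuperalgebra P) {Q : P}
    (hQ : Q ∈ psa.grade 1) (hQQ : psa.bracket Q Q = 0) (x : P) :
    psa.bracket Q (psa.bracket Q x) = 0 := by
  have h := psa.jacobi' hQ hQ x
  rw [hQQ] at h
  simp only [map_zero, LinearMap.zero_apply, zero_add] at h
  have h1 : (1 * 1 : ZMod 2) = 1 := by decide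
  rw [h1] at h
  have hz : zsign 1 = -1 := by simp [zsign]
  rw [hz] at h
  have h2 : (2 : ℝ) • psa.bracket Q (psa.bracket Q x) = 0 := by
    have h' := h
    rw [neg_smul, one_smul] at h'
    rw [two_smul]
    nth_rewrite 1 [h']
    abel
  have : psa.bracket Q (psa.bracket Q x) = ((2 : ℝ)⁻¹ * 2) • psa.bracket Q (psa.bracket Q x) := by
    norm_num
  rw [this, mul_smul, h2, smul_zero]

/-- Part 1 of Corollary 2.1: the homological vector field `Q(f) = {𝒬,f}` is a derivation
over the odd Jacobi bracket:
`Q([f,g]_J) = [Q(f),g]_J + (-1)^{|f|+1} [f,Q(g)]_J`. -/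
theorem homological_derivation
    (psa : PoissonSuperalgebra P) (A : Subalgebra ℝ P) (S Q : P)
    (hA_graded : ∀ a ∈ A, ∃ a₀ a₁ : P, a₀ ∈ A ∧ a₀ ∈ psa.grade 0 ∧
      a₁ ∈ A ∧ a₁ ∈ psa.grade 1 ∧ a = a₀ + a₁)
    (hA_bracket : ∀ f ∈ A, ∀ g ∈ A, psa.bracket f g = 0)
    (hS : S ∈ psa.grade 1) (hQ : Q ∈ psa.grade 1)
    (hQQ : psa.bracket Q Q = 0) (hQS : psa.bracket Q S = 0)
    (hSS : psa.bracket S S = -((2 : ℝ) • (Q * S)))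
    (hQA : ∀ f ∈ A, psa.bracket Q f ∈ A)
    (hSA : ∀ f ∈ A, ∀ g ∈ A, psa.bracket (psa.bracket S f) g ∈ A)
    {i : ZMod 2} {f g : P} (hf : f ∈ A) (hfi : f ∈ psa.grade i) (hg : g ∈ A) :
    psa.bracket Q (oddJacobiBracket psa S Q i f g)
      = oddJacobiBracket psa S Q (i + 1) (psa.bracket Q f) g
        + zsign (i + 1) • oddJacobiBracket psa S Q i f (psa.bracket Q g) := by
  have hi : ∀ j : ZMod 2, j = 0 ∨ j = 1 := by decide
  have hSf : psa.bracket S f ∈ psa.grade (1 + i) := psa.bracket_mem hS hfi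
  have hQf : psa.bracket Q f ∈ psa.grade (1 + i) := psa.bracket_mem hQ hfi
  have step1 := psa.jacobi' hQ hSf g
  have step2 : psa.bracket Q (psa.bracket S f) = -(psa.bracket S (psa.bracket Q f)) := by
    have h := psa.bracket_jacobi hQ hS hfi
    rw [hQS] at h
    simp only [map_zero, LinearMap.zero_apply, zero_add] at h
    have h1 : (1 * 1 : ZMod 2) = 1 := by decide
    rw [h1, show zsign 1 = -1 from by simp [zsign], neg_smul, one_smul] at h
    exact h
  have step3 : psa.bracket Q (psa.bracket Q (f * g)) = 0 := psa.QQ_zero hQ hQQ _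
  have step4 : psa.bracket Q (psa.bracket Q f * g)
      = zsign (1 * (1 + i)) • (psa.bracket Q f * psa.bracket Q g) := by
    rw [psa.leibniz' hQ hQf g, psa.QQ_zero hQ hQQ, zero_mul, zero_add]
  have step5 : psa.bracket Q (f * psa.bracket Q g)
      = psa.bracket Q f * psa.bracket Q g := by
    rw [psa.leibniz' hQ hfi (psa.bracket Q g), psa.QQ_zero hQ hQQ, mul_zero, smul_zero,
      add_zero]
  simp only [oddJacobiBracket, map_sub, map_smul, step1, step3, step4, step5, smul_zero,
    sub_zero, step2, map_neg, LinearMap.neg_apply]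
  have hz0 : zsign 0 = 1 := by simp [zsign]
  have hz1 : zsign 1 = -1 := by simp [zsign]
  have h11 : ((1 : ZMod 2) + 1) = 0 := by decide
  rcases hi i with rfl | rfl <;>
    · simp only [zero_add, add_zero, one_mul, mul_one, mul_zero, h11, hz0, hz1,
        one_smul, neg_smul, neg_neg, smul_neg]
      module
end
end

section
/- If f ∈ A is homogeneous and Q-closed, i.e. {𝒬,f} = 0, then the Hamiltonian vector field X_f is a Jacobi vector field in the sense that it is a derivation over the odd Jacobi bracket: X_f([g,h]_J) = [X_f(g),h]_J + (-1)^{(|f|+1)(|g|+1)} [g, X_f(h)]_J for all homogeneous g ∈ A and all h ∈ A. (This is the substantive direction of the proposition that a Hamiltonian vector field X_f is a Jacobi vector field if and only if f is Q-closed; note that when {𝒬,f} = 0 one has X_f(g) = (-1)^{|f|}[f,g]_J.) -/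
/-!
For `{Q,f} = 0` the field `X_f` is, on `A`, the inner derivation `{H_f, ·}` of `P` generated by
`H_f = (-1)^{|f|} f Q - {S,f}`; on all of `P` the two differ by `g ↦ Q {f,g}`, which vanishes on
the Poisson-commutative `A`. The conditions `{Q,Q} = 0`, `{Q,S} = 0`, `{S,S} = -2QS` and `{Q,f} = 0`
give `{H_f, S} = {H_f, Q} = 0`. An inner derivation killing `S` and `Q` preserves everything the
odd Jacobi bracket is built from (`S`, `Q`, product and Poisson bracket), so by the Leibniz rule
and the Jacobi identity it is a derivation of that bracket.
-/

noncomputable section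

variable {P : Type*} [Ring P] [Algebra ℝ P]

theorem zmod_two_eq_zero_or_eq_one (x : ZMod 2) : x = 0 ∨ x = 1 := by
  fin_cases x
  exacts [.inl rfl, .inr rfl]

namespace PoissonSuperalgebra

variable (psa : PoissonSuperalgebra P)

theorem induction_on_grade {p : P → Prop} (add : ∀ x y, p x → p y → p (x + y))
    (homogeneous : ∀ k x, x ∈ psa.grade k → p x) (x : P) : p x := by
  have hx : x ∈ psa.grade 0 ⊔ psa.grade 1 := psa.sup_grade ▸ Submodule.mem_top
  obtain ⟨x₀, hx₀, x₁, hx₁, rfl⟩ := Submodule.mem_sup.mp hx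
  exact add _ _ (homogeneous 0 x₀ hx₀) (homogeneous 1 x₁ hx₁)

variable {psa}

theorem bracket_mul_left {i j k : ZMod 2} {a b c : P} (ha : a ∈ psa.grade i)
    (hb : b ∈ psa.grade j) (hc : c ∈ psa.grade k) :
    psa.bracket (a * b) c = a * psa.bracket b c + zsign (j * k) • (psa.bracket a c * b) := by
  rw [psa.bracket_antisymm (psa.mul_mem ha hb) hc, psa.bracket_leibniz hc ha hb,
    psa.bracket_antisymm hc ha, psa.bracket_antisymm hc hb]
  rcases zmod_two_eq_zero_or_eq_one i with rfl | rfl <;>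
    rcases zmod_two_eq_zero_or_eq_one j with rfl | rfl <;>
    rcases zmod_two_eq_zero_or_eq_one k with rfl | rfl <;>
    simp [zsign_zero, zsign_one, CharTwo.add_self_eq_zero]

theorem two_smul_bracket_bracket_self {a : P} (ha : a ∈ psa.grade 1) {k : ZMod 2} {b : P}
    (hb : b ∈ psa.grade k) :
    (2 : ℝ) • psa.bracket a (psa.bracket a b) = psa.bracket (psa.bracket a a) b := by
  have h := psa.bracket_jacobi ha ha hb
  rw [one_mul, zsign_one, neg_one_smul] at h
  rw [two_smul]
  nth_rewrite 1 [h]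
  abel

theorem oddJacobiBracket_add_right (S Q : P) (j : ZMod 2) (g x y : P) :
    oddJacobiBracket psa S Q j g (x + y)
      = oddJacobiBracket psa S Q j g x + oddJacobiBracket psa S Q j g y := by
  simp only [oddJacobiBracket, mul_add, map_add, smul_add]
  abel

theorem hamiltonianVF_add_right (S Q : P) (i : ZMod 2) (f x y : P) :
    hamiltonianVF psa S Q i f (x + y)
      = hamiltonianVF psa S Q i f x + hamiltonianVF psa S Q i f y := by
  simp only [hamiltonianVF, oddJacobiBracket_add_right, mul_add, smul_add]
  abel

theorem bracket_oddJacobiBracket {S Q : P} (hS : S ∈ psa.grade 1) (hQ : Q ∈ psa.grade 1)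
    {p j : ZMod 2} {H g : P} (hH : H ∈ psa.grade p) (hHS : psa.bracket H S = 0)
    (hHQ : psa.bracket H Q = 0) (hg : g ∈ psa.grade j) (h : P) :
    psa.bracket H (oddJacobiBracket psa S Q j g h)
      = oddJacobiBracket psa S Q (p + j) (psa.bracket H g) h
        + zsign (p * (j + 1)) • oddJacobiBracket psa S Q j g (psa.bracket H h) := by
  induction h using psa.induction_on_grade with
  | add x y hx hy =>
    simp only [oddJacobiBracket_add_right, map_add, hx, hy, smul_add]
    abel
  | homogeneous k h hh =>
    have hHSg : psa.bracket H (psa.bracket S g) = zsign p • psa.bracket S (psa.bracket H g) := by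
      rw [psa.bracket_jacobi hH hS hg, hHS, mul_one]
      simp
    have hHQgh : psa.bracket H (psa.bracket Q (g * h))
        = zsign p • psa.bracket Q (psa.bracket H g * h)
          + zsign p • zsign (p * j) • psa.bracket Q (g * psa.bracket H h) := by
      rw [psa.bracket_jacobi hH hQ (psa.mul_mem hg hh), hHQ, psa.bracket_leibniz hH hg hh,
        mul_one]
      simp
    simp only [oddJacobiBracket, map_sub, map_smul, LinearMap.smul_apply,
      psa.bracket_jacobi hH (psa.bracket_mem hS hg) hh, hHSg, hHQgh]
    rcases zmod_two_eq_zero_or_eq_one p with rfl | rfl <;>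
      rcases zmod_two_eq_zero_or_eq_one j with rfl | rfl <;>
      simp [zsign_zero, zsign_one, CharTwo.add_self_eq_zero] <;> module

def hamiltonianLift (psa : PoissonSuperalgebra P) (S Q : P) (i : ZMod 2) (f : P) : P :=
  zsign i • (f * Q) - psa.bracket S f

section hamiltonianLift

variable {S Q : P} {i : ZMod 2} {f : P}

theorem hamiltonianLift_mem (hS : S ∈ psa.grade 1) (hQ : Q ∈ psa.grade 1)
    (hf : f ∈ psa.grade i) : hamiltonianLift psa S Q i f ∈ psa.grade (i + 1) :=
  Submodule.sub_mem _ (Submodule.smul_mem _ _ (psa.mul_mem hf hQ))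
    (add_comm 1 i ▸ psa.bracket_mem hS hf)

theorem bracket_hamiltonianLift_Q (hS : S ∈ psa.grade 1) (hQ : Q ∈ psa.grade 1)
    (hf : f ∈ psa.grade i) (hQf : psa.bracket Q f = 0) (hQQ : psa.bracket Q Q = 0)
    (hQS : psa.bracket Q S = 0) :
    psa.bracket (hamiltonianLift psa S Q i f) Q = 0 := by
  have hfQQ : psa.bracket (f * Q) Q = 0 := by
    rw [bracket_mul_left hf hQ hQ, hQQ, psa.bracket_antisymm hf hQ, hQf]
    simp
  have hSfQ : psa.bracket (psa.bracket S f) Q = 0 := by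
    rw [psa.bracket_antisymm (psa.bracket_mem hS hf) hQ, psa.bracket_jacobi hQ hS hf, hQS, hQf]
    simp
  simp [hamiltonianLift, hfQQ, hSfQ]

theorem bracket_hamiltonianLift_S (hS : S ∈ psa.grade 1) (hQ : Q ∈ psa.grade 1)
    (hf : f ∈ psa.grade i) (hQf : psa.bracket Q f = 0) (hQS : psa.bracket Q S = 0)
    (hSS : psa.bracket S S = -((2 : ℝ) • (Q * S))) :
    psa.bracket (hamiltonianLift psa S Q i f) S = 0 := by
  have hfQS : psa.bracket (f * Q) S = zsign i • (psa.bracket S f * Q) := by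
    rw [bracket_mul_left hf hQ hS, hQS, psa.bracket_antisymm hf hS]
    simp [zsign_one]
  have hSSf : psa.bracket S (psa.bracket S f) = -(Q * psa.bracket S f) := by
    have h := two_smul_bracket_bracket_self hS hf
    rw [hSS, map_neg, map_smul, LinearMap.neg_apply, LinearMap.smul_apply,
      bracket_mul_left hQ hS hf, hQf, zero_mul, smul_zero, add_zero, ← smul_neg] at h
    exact smul_right_injective P two_ne_zero h
  have hSfS : psa.bracket (psa.bracket S f) S = psa.bracket S f * Q := by
    rw [psa.bracket_antisymm (psa.bracket_mem hS hf) hS, hSSf,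
      psa.super_comm hQ (psa.bracket_mem hS hf)]
    rcases zmod_two_eq_zero_or_eq_one i with rfl | rfl <;>
      simp [zsign_zero, zsign_one, CharTwo.add_self_eq_zero]
  simp only [hamiltonianLift, map_sub, map_smul, LinearMap.sub_apply, LinearMap.smul_apply,
    hfQS, hSfS, smul_smul]
  rcases zmod_two_eq_zero_or_eq_one i with rfl | rfl <;> simp [zsign_zero, zsign_one]

theorem hamiltonianVF_eq_bracket_hamiltonianLift (hQ : Q ∈ psa.grade 1)
    (hf : f ∈ psa.grade i) (hQf : psa.bracket Q f = 0) (g : P) :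
    hamiltonianVF psa S Q i f g
      = psa.bracket (hamiltonianLift psa S Q i f) g - Q * psa.bracket f g := by
  induction g using psa.induction_on_grade with
  | add x y hx hy =>
    rw [hamiltonianVF_add_right, hx, hy, map_add, map_add, mul_add]
    abel
  | homogeneous j g hg =>
    simp only [hamiltonianVF, oddJacobiBracket, hamiltonianLift, psa.bracket_leibniz hQ hf hg,
      hQf, map_sub, map_smul, LinearMap.sub_apply, LinearMap.smul_apply,
      bracket_mul_left hf hQ hg, psa.super_comm hQ (psa.bracket_mem hf hg)]
    rcases zmod_two_eq_zero_or_eq_one i with rfl | rfl <;>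
      rcases zmod_two_eq_zero_or_eq_one j with rfl | rfl <;>
      simp [zsign_zero, zsign_one, CharTwo.add_self_eq_zero] <;> module

end hamiltonianLift

theorem oddJacobiBracket_mem {A : Subalgebra ℝ P} {S Q : P}
    (hQA : ∀ f ∈ A, psa.bracket Q f ∈ A)
    (hSA : ∀ f ∈ A, ∀ g ∈ A, psa.bracket (psa.bracket S f) g ∈ A)
    (j : ZMod 2) {g h : P} (hg : g ∈ A) (hh : h ∈ A) : oddJacobiBracket psa S Q j g h ∈ A :=
  A.sub_mem (A.smul_mem (hSA g hg h hh) _) (A.smul_mem (hQA _ (A.mul_mem hg hh)) _)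

end PoissonSuperalgebra

open PoissonSuperalgebra in
theorem hamiltonianVF_jacobi_of_Qclosed_general
    (psa : PoissonSuperalgebra P) (A : Subalgebra ℝ P) (S Q : P)
    (hA_bracket : ∀ f ∈ A, ∀ g ∈ A, psa.bracket f g = 0)
    (hS : S ∈ psa.grade 1) (hQ : Q ∈ psa.grade 1)
    (hQQ : psa.bracket Q Q = 0) (hQS : psa.bracket Q S = 0)
    (hSS : psa.bracket S S = -((2 : ℝ) • (Q * S)))
    (hQA : ∀ f ∈ A, psa.bracket Q f ∈ A)
    (hSA : ∀ f ∈ A, ∀ g ∈ A, psa.bracket (psa.bracket S f) g ∈ A)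
    {i j : ZMod 2} {f g h : P} (hf : f ∈ A) (hfi : f ∈ psa.grade i)
    (hQf : psa.bracket Q f = 0)
    (hg : g ∈ A) (hgj : g ∈ psa.grade j) (hh : h ∈ A) :
    hamiltonianVF psa S Q i f (oddJacobiBracket psa S Q j g h)
      = oddJacobiBracket psa S Q (i + j + 1) (hamiltonianVF psa S Q i f g) h
        + zsign ((i + 1) * (j + 1)) •
            oddJacobiBracket psa S Q j g (hamiltonianVF psa S Q i f h) := by
  have hX : ∀ x ∈ A,
      hamiltonianVF psa S Q i f x = psa.bracket (hamiltonianLift psa S Q i f) x := fun x hx ↦ by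
    rw [hamiltonianVF_eq_bracket_hamiltonianLift hQ hfi hQf, hA_bracket f hf x hx, mul_zero,
      sub_zero]
  rw [hX _ (oddJacobiBracket_mem hQA hSA j hg hh), hX g hg, hX h hh, add_right_comm i j 1]
  exact bracket_oddJacobiBracket hS hQ (hamiltonianLift_mem hS hQ hfi)
    (bracket_hamiltonianLift_S hS hQ hfi hQf hQS hSS)
    (bracket_hamiltonianLift_Q hS hQ hfi hQf hQQ hQS) hgj h

/-- Proposition 2.4 (substantive direction): if `f` is Q-closed, `{𝒬,f} = 0`, then the
Hamiltonian vector field `X_f` is a derivation over the odd Jacobi bracket: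
`X_f([g,h]_J) = [X_f(g),h]_J + (-1)^{(|f|+1)(|g|+1)} [g, X_f(h)]_J`. -/
theorem hamiltonianVF_jacobi_of_Qclosed
    (psa : PoissonSuperalgebra P) (A : Subalgebra ℝ P) (S Q : P)
    (hA_graded : ∀ a ∈ A, ∃ a₀ a₁ : P, a₀ ∈ A ∧ a₀ ∈ psa.grade 0 ∧
      a₁ ∈ A ∧ a₁ ∈ psa.grade 1 ∧ a = a₀ + a₁)
    (hA_bracket : ∀ f ∈ A, ∀ g ∈ A, psa.bracket f g = 0)
    (hS : S ∈ psa.grade 1) (hQ : Q ∈ psa.grade 1)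
    (hQQ : psa.bracket Q Q = 0) (hQS : psa.bracket Q S = 0)
    (hSS : psa.bracket S S = -((2 : ℝ) • (Q * S)))
    (hQA : ∀ f ∈ A, psa.bracket Q f ∈ A)
    (hSA : ∀ f ∈ A, ∀ g ∈ A, psa.bracket (psa.bracket S f) g ∈ A)
    {i j : ZMod 2} {f g h : P} (hf : f ∈ A) (hfi : f ∈ psa.grade i)
    (hQf : psa.bracket Q f = 0)
    (hg : g ∈ A) (hgj : g ∈ psa.grade j) (hh : h ∈ A) :
    hamiltonianVF psa S Q i f (oddJacobiBracket psa S Q j g h)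
      = oddJacobiBracket psa S Q (i + j + 1) (hamiltonianVF psa S Q i f g) h
        + zsign ((i + 1) * (j + 1)) •
            oddJacobiBracket psa S Q j g (hamiltonianVF psa S Q i f h) :=
  hamiltonianVF_jacobi_of_Qclosed_general psa A S Q hA_bracket hS hQ hQQ hQS hSS hQA hSA hf hfi hQf
    hg hgj hh
end
end

section
/- (Schoutenization.) Let S, 𝒬 ∈ P₁ be odd elements with {𝒬,𝒬} = 0, {𝒬,S} = 0 and {S,S} = -2𝒬S (the conditions defining an odd Jacobi structure). Suppose u, p ∈ P₀ are even elements satisfying {u,p} = u and {u,S} = {u,𝒬} = {p,S} = {p,𝒬} = 0. Then the element S̄ := u·(S - 𝒬·p) satisfies {S̄,S̄} = 0 and {𝒬,S̄} = 0. (This is the algebraic content of the theorem that adding "time" to an odd Jacobi manifold M produces a QS-manifold M × ℝ: here u plays the role of e^{-t} and p the momentum conjugate to the time coordinate t, so that S̄ = e^{-t}(S - 𝒬p) is an odd Poisson-self-commuting "Hamiltonian", i.e. a Schouten structure invariant under the homological vector field.) -/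
noncomputable section

variable {P : Type*} [Ring P] [Algebra ℝ P]

/-- Schoutenization (Theorem 2.2): given an odd Jacobi structure `(S, 𝒬)` and even elements
`u` (playing the role of `e^{-t}`) and `p` (the momentum conjugate to `t`) with
`{u,p} = u` and `u, p` bracket-commuting with `S` and `𝒬`, the element
`S̄ = u(S - 𝒬 p)` satisfies `{S̄,S̄} = 0`  and `{𝒬,S̄} = 0`. -/
theorem schoutenization
    (psa : PoissonSuperalgebra P) (S Q u p : P)
    (hS : S ∈ psa.grade 1) (hQ : Q ∈ psa.grade 1)
    (hu : u ∈ psa.grade 0) (hp : p ∈ psa.grade 0)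
    (hQQ : psa.bracket Q Q = 0) (hQS : psa.bracket Q S = 0)
    (hSS : psa.bracket S S = -((2 : ℝ) • (Q * S)))
    (hup : psa.bracket u p = u)
    (huS : psa.bracket u S = 0) (huQ : psa.bracket u Q = 0)
    (hpS : psa.bracket p S = 0) (hpQ : psa.bracket p Q = 0) :
    psa.bracket (u * (S - Q * p)) (u * (S - Q * p)) = 0 ∧
      psa.bracket Q (u * (S - Q * p)) = 0 := by
  have zs0 : zsign 0 = (1 : ℝ) := rfl
  have zs1 : zsign 1 = (-1 : ℝ) := rfl
  have h10 : (1 : ZMod 2) * 0 = 0 := by decide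
  have h01 : (0 : ZMod 2) * 1 = 0 := by decide
  have h11 : (1 : ZMod 2) * 1 = 1 := by decide
  have h00 : (0 : ZMod 2) * 0 = 0 := by decide
  -- grading memberships
  have hQp_mem : Q * p ∈ psa.grade 1 := by
    have := psa.mul_mem hQ hp; simpa using this
  have hA : S - Q * p ∈ psa.grade 1 := sub_mem hS hQp_mem
  have huA_mem : u * (S - Q * p) ∈ psa.grade 1 := by
    have := psa.mul_mem hu hA; simpa using this
  -- commutation of u with odd elements
  have huQc : u * Q = Q * u := by
    have := psa.super_comm hu hQ; rw [h01, zs0, one_smul] at this; exact this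
  -- Q * Q = 0
  have hQ2 : Q * Q = 0 := by
    have h := psa.super_comm hQ hQ
    rw [h11, zs1, neg_one_smul] at h
    have h2 : (2 : ℝ) • (Q * Q) = 0 := by
      rw [two_smul]; nth_rewrite 1 [h]; exact neg_add_cancel _
    have := smul_eq_zero.mp h2
    simpa using this
  -- basic bracket facts
  have hQu : psa.bracket Q u = 0 := by
    have := psa.bracket_antisymm hQ hu
    rw [h10, zs0, one_smul, huQ] at this; simpa using this
  have hQp' : psa.bracket Q p = 0 := by
    have := psa.bracket_antisymm hQ hp
    rw [h10, zs0, one_smul, hpQ] at this; simpa using this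
  have hSp' : psa.bracket S p = 0 := by
    have := psa.bracket_antisymm hS hp
    rw [h10, zs0, one_smul, hpS] at this; simpa using this
  have hSQ' : psa.bracket S Q = 0 := by
    have := psa.bracket_antisymm hS hQ
    rw [h11, zs1, neg_one_smul, hQS] at this; simpa using this
  have hpp : psa.bracket p p = 0 := by
    have h := psa.bracket_antisymm hp hp
    rw [h00, zs0, one_smul] at h
    have h2 : (2 : ℝ) • psa.bracket p p = 0 := by
      rw [two_smul]; nth_rewrite 1 [h]; exact neg_add_cancel _
    have := smul_eq_zero.mp h2; simpa using this
  have huu : psa.bracket u u = 0 := by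
    have h := psa.bracket_antisymm hu hu
    rw [h00, zs0, one_smul] at h
    have h2 : (2 : ℝ) • psa.bracket u u = 0 := by
      rw [two_smul]; nth_rewrite 1 [h]; exact neg_add_cancel _
    have := smul_eq_zero.mp h2; simpa using this
  -- brackets with Q*p
  have hbQQp : psa.bracket Q (Q * p) = 0 := by
    rw [psa.bracket_leibniz hQ hQ hp, hQQ, hQp', h11, zs1]
    simp
  have hQA : psa.bracket Q (S - Q * p) = 0 := by
    rw [map_sub, hQS, hbQQp, sub_zero]
  have hbuQp : psa.bracket u (Q * p) = Q * u := by
    rw [psa.bracket_leibniz hu hQ hp, huQ, hup, h01, zs0]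
    simp
  have huAbr : psa.bracket u (S - Q * p) = -(Q * u) := by
    rw [map_sub, huS, hbuQp]; abel
  have hAu : psa.bracket (S - Q * p) u = Q * u := by
    have := psa.bracket_antisymm hA hu
    rw [h10, zs0, one_smul, huAbr] at this
    simpa using this
  have hbSQp : psa.bracket S (Q * p) = 0 := by
    rw [psa.bracket_leibniz hS hQ hp, hSQ', hSp', h11, zs1]
    simp
  have hbQpS : psa.bracket (Q * p) S = 0 := by
    have := psa.bracket_antisymm hQp_mem hS
    rw [h11, zs1, neg_one_smul, hbSQp] at this; simpa using this
  have hbpQp : psa.bracket p (Q * p) = 0 := by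
    rw [psa.bracket_leibniz hp hQ hp, hpQ, hpp, h01, zs0]
    simp
  have hbQpp : psa.bracket (Q * p) p = 0 := by
    have := psa.bracket_antisymm hQp_mem hp
    rw [h10, zs0, one_smul, hbpQp] at this; simpa using this
  have hbQpQ : psa.bracket (Q * p) Q = 0 := by
    have := psa.bracket_antisymm hQp_mem hQ
    rw [h11, zs1, neg_one_smul, hbQQp] at this; simpa using this
  have hbQpQp : psa.bracket (Q * p) (Q * p) = 0 := by
    rw [psa.bracket_leibniz hQp_mem hQ hp, hbQpQ, hbQpp, h11, zs1]
    simp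
  -- {A, A} = {S, S}
  have hAA : psa.bracket (S - Q * p) (S - Q * p) = -((2 : ℝ) • (Q * S)) := by
    simp only [map_sub, LinearMap.sub_apply, hbSQp, hbQpS, hbQpQp, hSS]
    abel
  -- {A, uA}
  have hAuA : psa.bracket (S - Q * p) (u * (S - Q * p))
      = Q * u * (S - Q * p) + u * -((2 : ℝ) • (Q * S)) := by
    rw [psa.bracket_leibniz hA hu hA, hAu, hAA, h10, zs0, one_smul]
  -- {u, uA}
  have huuA : psa.bracket u (u * (S - Q * p)) = -(u * (Q * u)) := by
    rw [psa.bracket_leibniz hu hu hA, huu, huAbr, h00, zs0, one_smul, zero_mul, zero_add,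
      mul_neg]
  have huAu : psa.bracket (u * (S - Q * p)) u = u * (Q * u) := by
    have := psa.bracket_antisymm huA_mem hu
    rw [h10, zs0, one_smul, huuA] at this; simpa using this
  have huAA : psa.bracket (u * (S - Q * p)) (S - Q * p)
      = Q * u * (S - Q * p) + u * -((2 : ℝ) • (Q * S)) := by
    have := psa.bracket_antisymm huA_mem hA
    rw [h11, zs1, neg_one_smul, hAuA] at this
    simpa using this
  have hQmulA : Q * (S - Q * p) = Q * S := by
    rw [mul_sub, ← mul_assoc, hQ2, zero_mul, sub_zero]
  constructor
  · rw [psa.bracket_leibniz huA_mem hu hA, huAu, huAA, h10, zs0, one_smul, ← huQc]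
    simp only [mul_neg, mul_smul_comm, mul_assoc, hQmulA, two_smul, mul_add]
    abel
  · rw [psa.bracket_leibniz hQ hu hA, hQu, hQA, h10, zs0, one_smul, zero_mul, mul_zero,
      add_zero]
end
end

section
/- (Exact QS-structures give odd Jacobi structures.) Let S̄, 𝒬̄ ∈ P₁ be odd elements and ℰ ∈ P₀ an even element satisfying {S̄,S̄} = 0, {𝒬̄,𝒬̄} = 0, {𝒬̄,S̄} = 0, {ℰ,S̄} = -S̄ and {ℰ,𝒬̄} = -𝒬̄. Then the element S := S̄ + ℰ·𝒬̄ satisfies {S,S} = -2𝒬̄·S and {𝒬̄,S} = 0. (This is the theorem that every exact QS-manifold, with Schouten structure S̄, homological structure 𝒬̄ and homothety vector field with symbol ℰ, carries an odd Jacobi structure (S̄ + ℰ𝒬̄, 𝒬̄) on the same underlying manifold.) -/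
noncomputable section

variable {P : Type*} [Ring P] [Algebra ℝ P]

/-- Theorem 2.3: an exact QS-structure `(S̄, 𝒬̄, ℰ)` yields an odd Jacobi structure
`(S = S̄ + ℰ𝒬̄, 𝒬̄)`: one has `{S,S} = -2𝒬̄S` and `{𝒬̄,S} = 0`. -/
theorem exactQS_to_oddJacobi
    (psa : PoissonSuperalgebra P) (Sb Qb E : P)
    (hSb : Sb ∈ psa.grade 1) (hQb : Qb ∈ psa.grade 1) (hE : E ∈ psa.grade 0)
    (hSS : psa.bracket Sb Sb = 0) (hQQ : psa.bracket Qb Qb = 0)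
    (hQS : psa.bracket Qb Sb = 0)
    (hES : psa.bracket E Sb = -Sb) (hEQ : psa.bracket E Qb = -Qb) :
    psa.bracket (Sb + E * Qb) (Sb + E * Qb)
        = -((2 : ℝ) • (Qb * (Sb + E * Qb))) ∧
      psa.bracket Qb (Sb + E * Qb) = 0 := by
  have hz0 : zsign 0 = 1 := rfl
  have hz1 : zsign 1 = -1 := rfl
  -- Qb * Qb = 0
  have hQbQb : Qb * Qb = 0 := by
    have h := psa.super_comm hQb hQb
    simp only [mul_one, hz1, neg_smul, one_smul] at h
    have h2 : (2 : ℝ) • (Qb * Qb) = 0 := by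
      rw [two_smul]
      nth_rewrite 1 [h]
      simp
    have := smul_eq_zero.mp h2
    simpa using this
  -- {Qb, E} = Qb
  have hQbE : psa.bracket Qb E = Qb := by
    rw [psa.bracket_antisymm hQb hE, hEQ]
    simp [hz0]
  -- {Qb, E*Qb} = Qb*Qb = 0
  have hQEQ : psa.bracket Qb (E * Qb) = 0 := by
    rw [psa.bracket_leibniz hQb hE hQb, hQbE, hQQ]
    simp [hz0, hQbQb]
  -- second conjunct
  have hQS' : psa.bracket Qb (Sb + E * Qb) = 0 := by
    rw [map_add, hQS, hQEQ, add_zero]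
  -- {Sb, E} = Sb
  have hSbE : psa.bracket Sb E = Sb := by
    rw [psa.bracket_antisymm hSb hE, hES]
    simp [hz0]
  -- {Sb, Qb} = 0
  have hSQ : psa.bracket Sb Qb = 0 := by
    rw [psa.bracket_antisymm hSb hQb, hQS]
    simp
  -- {Sb, E*Qb} = Sb*Qb
  have hSEQ : psa.bracket Sb (E * Qb) = Sb * Qb := by
    rw [psa.bracket_leibniz hSb hE hQb, hSbE, hSQ]
    simp [hz0]
  have hEQ1 : E * Qb ∈ psa.grade 1 := by
    have := psa.mul_mem hE hQb
    simpa using this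
  -- {E*Qb, Sb} = Sb*Qb
  have hEQS : psa.bracket (E * Qb) Sb = Sb * Qb := by
    rw [psa.bracket_antisymm hEQ1 hSb, hSEQ]
    simp [hz1]
  -- {E, E} = 0
  have hEE : psa.bracket E E = 0 := by
    have h := psa.bracket_antisymm hE hE
    simp only [mul_zero, hz0, one_smul] at h
    have h2 : (2 : ℝ) • psa.bracket E E = 0 := by
      rw [two_smul]
      nth_rewrite 1 [h]
      simp
    have := smul_eq_zero.mp h2
    simpa using this
  -- {E*Qb, E} = E*Qb
  have hEQE : psa.bracket (E * Qb) E = E * Qb := by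
    rw [psa.bracket_antisymm hEQ1 hE]
    rw [psa.bracket_leibniz hE hE hQb, hEE, hEQ]
    simp [hz0]
  -- {E*Qb, Qb} = 0
  have hEQQ : psa.bracket (E * Qb) Qb = 0 := by
    rw [psa.bracket_antisymm hEQ1 hQb, hQEQ]
    simp
  -- {E*Qb, E*Qb} = 0
  have hEQEQ : psa.bracket (E * Qb) (E * Qb) = 0 := by
    rw [psa.bracket_leibniz hEQ1 hE hQb, hEQE, hEQQ]
    simp [hz0, mul_assoc, hQbQb]
  -- Qb * Sb = -(Sb * Qb)
  have hcomm : Qb * Sb = -(Sb * Qb) := by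
    have h := psa.super_comm hQb hSb
    simpa [hz1] using h
  -- Qb * (E * Qb) = 0
  have hQEQmul : Qb * (E * Qb) = 0 := by
    have h := psa.super_comm hQb hE
    simp only [mul_zero, hz0, one_smul] at h
    rw [← mul_assoc, h, mul_assoc, hQbQb, mul_zero]
  refine ⟨?_, hQS'⟩
  rw [map_add psa.bracket Sb (E * Qb), LinearMap.add_apply, map_add, map_add, hSS, hSEQ, hEQS, hEQEQ]
  rw [mul_add, hQEQmul, hcomm]
  simp [two_smul]
end
end

section
/- (Pencil of odd Jacobi structures.) Let S̄, 𝒬̄ ∈ P₁ be odd elements and ℰ ∈ P₀ an even element satisfying {S̄,S̄} = 0, {𝒬̄,𝒬̄} = 0, {𝒬̄,S̄} = 0, {ℰ,S̄} = -S̄ and {ℰ,𝒬̄} = -𝒬̄. Then for all real numbers a, b, the elements S_{a,b} := a·S̄ + b·ℰ·𝒬̄ and 𝒬_{a,b} := b·𝒬̄ satisfy {S_{a,b},S_{a,b}} = -2𝒬_{a,b}·S_{a,b}, {𝒬_{a,b},S_{a,b}} = 0 and {𝒬_{a,b},𝒬_{a,b}} = 0. (This is the corollary that every exact QS-structure gives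 rise to a pencil of odd Jacobi structures.) -/
noncomputable section

variable {P : Type*} [Ring P] [Algebra ℝ P]

/-- Corollary 2.2: every exact QS-structure `(S̄, 𝒬̄, ℰ)` gives rise to a pencil of odd
Jacobi structures `(S_{a,b} = a S̄ + b ℰ𝒬̄, 𝒬_{a,b} = b 𝒬̄)` for real `a, b`. -/
theorem exactQS_pencil
    (psa : PoissonSuperalgebra P) (Sb Qb E : P)
    (hSb : Sb ∈ psa.grade 1) (hQb : Qb ∈ psa.grade 1) (hE : E ∈ psa.grade 0)
    (hSS : psa.bracket Sb Sb = 0) (hQQ : psa.bracket Qb Qb = 0)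
    (hQS : psa.bracket Qb Sb = 0)
    (hES : psa.bracket E Sb = -Sb) (hEQ : psa.bracket E Qb = -Qb)
    (a b : ℝ) :
    psa.bracket (a • Sb + b • (E * Qb)) (a • Sb + b • (E * Qb))
        = -((2 : ℝ) • ((b • Qb) * (a • Sb + b • (E * Qb)))) ∧
      psa.bracket (b • Qb) (a • Sb + b • (E * Qb)) = 0 ∧
      psa.bracket (b • Qb) (b • Qb) = 0 := by

  have half : ∀ x : P, x = -x → x = 0 := by
    intro x hx
    have h2 : (2:ℝ) • x = 0 := by
      rw [two_smul]; nth_rewrite 2 [hx]; exact add_neg_cancel x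
    have := congrArg (fun y => (1/2 : ℝ) • y) h2
    simpa [smul_smul] using this
  have zs0 : zsign 0 = 1 := rfl
  have zs1 : zsign 1 = -1 := rfl
  have hQQmul : Qb * Qb = 0 := by
    have := psa.super_comm hQb hQb
    simp [zsign] at this
    exact half _ (by simpa using this)
  have hSQ : psa.bracket Sb Qb = 0 := by
    have := psa.bracket_antisymm hSb hQb
    simp [zsign, hQS] at this
    exact this
  have hQE : psa.bracket Qb E = Qb := by
    have := psa.bracket_antisymm hQb hE
    simp [zsign, hEQ] at this
    exact this
  have hSE : psa.bracket Sb E = Sb := by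
    have := psa.bracket_antisymm hSb hE
    simp [zsign, hES] at this
    exact this
  have hEE : psa.bracket E E = 0 := by
    have := psa.bracket_antisymm hE hE
    simp [zsign] at this
    exact half _ (by simpa using this)
  have hQEQ : psa.bracket Qb (E * Qb) = 0 := by
    rw [psa.bracket_leibniz hQb hE hQb, hQE, hQQ]
    simp [zsign, hQQmul]
  have hSEQ : psa.bracket Sb (E * Qb) = Sb * Qb := by
    rw [psa.bracket_leibniz hSb hE hQb, hSE, hSQ]
    simp [zsign]
  have hEQmem : E * Qb ∈ psa.grade 1 := by
    simpa using psa.mul_mem hE hQb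
  have hEQS : psa.bracket (E * Qb) Sb = Sb * Qb := by
    have := psa.bracket_antisymm hEQmem hSb
    rw [hSEQ] at this
    simpa [zsign] using this
  have hEEQ : psa.bracket E (E * Qb) = -(E * Qb) := by
    rw [psa.bracket_leibniz hE hE hQb, hEE, hEQ]
    simp [zsign, mul_neg]
  have hEQE : psa.bracket (E * Qb) E = E * Qb := by
    have := psa.bracket_antisymm hEQmem hE
    rw [hEEQ] at this
    simpa [zsign] using this
  have hEQQ : psa.bracket (E * Qb) Qb = 0 := by
    have := psa.bracket_antisymm hEQmem hQb
    rw [hQEQ] at this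
    simpa [zsign] using this
  have hEQEQ : psa.bracket (E * Qb) (E * Qb) = 0 := by
    rw [psa.bracket_leibniz hEQmem hE hQb, hEQE, hEQQ]
    simp [zsign, mul_assoc, hQQmul]
  have hQSmul : Qb * Sb = -(Sb * Qb) := by
    have := psa.super_comm hQb hSb
    simpa [zsign] using this
  have hQEmul : Qb * E = E * Qb := by
    have := psa.super_comm hQb hE
    simpa [zsign] using this
  have hQEQmul : Qb * (E * Qb) = 0 := by
    rw [← mul_assoc, hQEmul, mul_assoc, hQQmul, mul_zero]
  refine ⟨?_, ?_, ?_⟩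
  · simp only [map_add, map_smul, LinearMap.add_apply, LinearMap.smul_apply,
      hSS, hSEQ, hEQS, hEQEQ, smul_zero, add_zero, zero_add,
      mul_add, add_mul, smul_mul_assoc, mul_smul_comm, hQSmul, hQEQmul]
    module
  · simp only [map_add, map_smul, LinearMap.add_apply, LinearMap.smul_apply,
      hQS, hQEQ, smul_zero, add_zero]
  · simp only [map_smul, LinearMap.smul_apply, hQQ, smul_zero]
end
end

section
/- (From quasi Q-manifolds of weight one to homological vector fields.) Let A be a commutative ring, let D : A → A and Ξ : A → A be additive maps, and let q ∈ A satisfy: q·q = 0; Ξ(q) = q; D(q) = 0; Ξ(q·a) = Ξ(q)·a + q·Ξ(a) for all a ∈ A; D(q·a) = -q·D(a) for all a ∈ A; (Ξ∘D - D∘Ξ)(a) = D(a) for all a ∈ A; and D(D(a)) = q·D(a) for all a ∈ A. Define Q : A → A by Q(a) := D(a) - q·Ξ(a). Then Q(Q(a)) = 0 for all a ∈ A, and Q(q) = 0. (This is the proposition that the weight-one quasi Q-manifold (ΠE, 𝒟, q) associated with a Jacobi algebroid yields a homological vector field Q := 𝒟 - qΞ of weight one on ΠE — hence a Lie algebroid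 structure on E → M — together with the 1-cocycle q; here A abstracts C^∞(ΠE), Ξ the Euler vector field, 𝒟 the odd almost homological vector field of weight one satisfying 𝒟² = q𝒟 and 𝒟(q) = 0, and q the odd weight-one curving function.) -/
/-- Proposition 3.1: the weight-one quasi Q-manifold `(ΠE, 𝒟, q)` associated with a Jacobi
algebroid yields a homological vector field `Q := 𝒟 - qΞ` with `Q² = 0` and `Q(q) = 0`,
i.e. a Lie algebroid with a 1-cocycle. Here `A` abstracts `C^∞(ΠE)`, `Ξ` the Euler vector
field, `D` the almost homological vector field and `q` the curving function. -/
theorem quasiQ_to_homological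
    {A : Type*} [CommRing A] (D Xi : A →+ A) (q : A)
    (hqq : q * q = 0) (hXiq : Xi q = q) (hDq : D q = 0)
    (hXi_leib : ∀ a : A, Xi (q * a) = Xi q * a + q * Xi a)
    (hD_sign : ∀ a : A, D (q * a) = -(q * D a))
    (hweight : ∀ a : A, Xi (D a) - D (Xi a) = D a)
    (hD2 : ∀ a : A, D (D a) = q * D a) :
    (∀ a : A, D (D a - q * Xi a) - q * Xi (D a - q * Xi a) = 0) ∧
      D q - q * Xi q = 0 := by
  constructor
  · intro a
    have hXiD : Xi (D a) = D (Xi a) + D a := by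
      linear_combination hweight a
    rw [map_sub, map_sub, hD2, hD_sign, hXi_leib, hXiq, hXiD]
    have h2 : q ^ 2 = 0 := by rw [sq]; exact hqq
    ring_nf
    rw [h2]
    ring
  · rw [hDq, hXiq, hqq, sub_zero]
end

section
/- (From Lie algebroids with a 1-cocycle to quasi Q-manifolds of weight one.) Let A be a commutative ring, let Q : A → A and Ξ : A → A be additive maps, and let φ ∈ A satisfy: φ·φ = 0; Ξ(φ) = φ; Q(φ) = 0; Ξ(φ·a) = Ξ(φ)·a + φ·Ξ(a) for all a ∈ A; Q(φ·a) = -φ·Q(a) for all a ∈ A; (Ξ∘Q - Q∘Ξ)(a) = Q(a) for all a ∈ A; and Q(Q(a)) = 0 for all a ∈ A. Define D : A → A by D(a) := Q(a) + φ·Ξ(a). Then D(D(a)) = φ·D(a) for all a ∈ A, and D(φ) = 0. (This is the proposition that a Lie algebroid (ΠE, Q) together with an odd 1-cocycle φ — i.e. Ξ(φ) = 1·φ and Q(φ) = 0 — yields a quasi Q-manifold structure (ΠE, D = Q + φΞ, q = φ) of weight one, and hence a Jacobi algebroid; here A abstracts C^∞(ΠE), Ξ the Euler vector field, Q the weight-one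 homological vector field, and φ the odd 1-cocycle.) -/
/-- Proposition 3.2: a Lie algebroid `(ΠE, Q)` with an odd 1-cocycle `φ` yields a
weight-one quasi Q-manifold `(ΠE, D = Q + φΞ, q = φ)`: one has `D² = φD` and `D(φ) = 0`.
Here `A` abstracts `C^∞(ΠE)`, `Ξ` the Euler vector field, `Q` the weight-one homological
vector field and `φ` the odd 1-cocycle. -/
theorem cocycle_to_quasiQ
    {A : Type*} [CommRing A] (Q Xi : A →+ A) (phi : A)
    (hpp : phi * phi = 0) (hXip : Xi phi = phi) (hQp : Q phi = 0)
    (hXi_leib : ∀ a : A, Xi (phi * a) = Xi phi * a + phi * Xi a)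
    (hQ_sign : ∀ a : A, Q (phi * a) = -(phi * Q a))
    (hweight : ∀ a : A, Xi (Q a) - Q (Xi a) = Q a)
    (hQ2 : ∀ a : A, Q (Q a) = 0) :
    (∀ a : A, Q (Q a + phi * Xi a) + phi * Xi (Q a + phi * Xi a)
        = phi * (Q a + phi * Xi a)) ∧
      Q phi + phi * Xi phi = 0 := by
  constructor
  · intro a
    have hw : Xi (Q a) = Q (Xi a) + Q a := by
      linear_combination hweight a
    rw [map_add, map_add, hQ2, hQ_sign, hXi_leib, hXip, hw]
    have h2 : phi ^ 2 = 0 := by rw [sq]; exact hpp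
    linear_combination Xi (Xi a) * h2
  · rw [hQp, hXip, hpp, zero_add]
end
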